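/- arXiv:2102.05274 — 6 statements merged into one kernel-verified Lean document; each statement's English description precedes it below -/
import Mathlib

section
/- For every γ > 0 and every integer n ≥ 1 the following holds with β = 2γ: there exist a dimension d, a quadratic loss function f(w; (x, y)) = (1/2)wᵀAw − y·xᵀw which as a function of w is γ-strongly-convex and β-smooth for every data point, twin datasets S, S' of size n, and a data point z, such that for every T ≥ 1, coupled uniform-sampling SGD with constant step size α = 1/(2β) initialized at w_0 = w_0' = 0 satisfies E_A‖Δ_T‖ ≥ 1/(16γn) and E_A|f(w_T; z) − f(w_T'; z)| ≥ 1/(16γn); in particular the uniform stability satisfies ε_stab ≥ 1/(16γn). -/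
open Finset
open scoped RealInnerProductSpace

noncomputable section

/-- SGD iterates: `sgd f α z w0 t` is the parameter after `t` steps, where `z s` is the
data point used at step `s` and `α s` the step size of step `s` (steps are numbered from 1). -/
def sgd {d : ℕ} {Z : Type*} (f : EuclideanSpace ℝ (Fin d) → Z → ℝ) (α : ℕ → ℝ) (z : ℕ → Z)
    (w0 : EuclideanSpace ℝ (Fin d)) : ℕ → EuclideanSpace ℝ (Fin d)
  | 0 => w0
  | t + 1 => sgd f α z w0 t - α (t + 1) • gradient (fun w => f w (z (t + 1))) (sgd f α z w0 t)

/-- Divergence `Δ_t = w_t - w_t'` of coupled SGD on the datasets `S, S'` with the common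
index sequence `idx` and common initialization `w0`. -/
def sgdDelta {d n : ℕ} {Z : Type*} (f : EuclideanSpace ℝ (Fin d) → Z → ℝ) (α : ℕ → ℝ)
    (S S' : Fin n → Z) (idx : ℕ → Fin n) (w0 : EuclideanSpace ℝ (Fin d)) (t : ℕ) :
    EuclideanSpace ℝ (Fin d) :=
  sgd f α (fun s => S (idx s)) w0 t - sgd f α (fun s => S' (idx s)) w0 t

/-- Extend a finite index tuple (steps `1,…,T`) to an index sequence `ℕ → Fin n`. -/
def extSeq {n : ℕ} (hn : 0 < n) {T : ℕ} (ω : Fin T → Fin n) : ℕ → Fin n :=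
  fun t => if h : 0 < t ∧ t ≤ T then ω ⟨t - 1, by omega⟩ else ⟨0, hn⟩

/-- Expectation over uniform-sampling SGD randomness: the indices `i_1,…,i_T` are i.i.d.
uniform on `{1,…,n}` and `g` depends on the index sequence. -/
def expA {n : ℕ} (hn : 0 < n) (T : ℕ) (g : (ℕ → Fin n) → ℝ) : ℝ :=
  (∑ ω : Fin T → Fin n, g (extSeq hn ω)) / (n : ℝ) ^ T

open Classical in
/-- Conditional expectation over uniform-sampling SGD randomness given an event `E` of the
index sequence. -/
def expACond {n : ℕ} (hn : 0 < n) (T : ℕ) (g : (ℕ → Fin n) → ℝ)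
    (E : (ℕ → Fin n) → Prop) : ℝ :=
  (∑ ω ∈ univ.filter (fun ω : Fin T → Fin n => E (extSeq hn ω)), g (extSeq hn ω)) /
    ((univ.filter (fun ω : Fin T → Fin n => E (extSeq hn ω))).card : ℝ)

/-!
Take `d = 1`, `A = γ • id` (so the loss is `γ`-strongly convex and `γ`-smooth, hence
`2γ`-smooth), `S` with every point equal to `(e, 0)` and its twin `S'` carrying the label `1` at
one index `i`. SGD on `S` never leaves `0`. On `S'` the iterate is `r_t • e` with
`r_{t+1} = (1 - αγ) r_t + α · [i_{t+1} = i]`, so `r_T ≥ 0` always and `r_T ≥ α = 1/(4γ)` whenever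
the last sampled index is `i`, an event of probability `1/n`. Both `‖Δ_T‖ = r_T` and the loss gap
`γ r_T² / 2 + r_T` at `z = (e, -1)` dominate `r_T`, which gives `E_A ≥ 1/(4γn) ≥ 1/(16γn)`.
-/

section QuadraticLoss

variable {E : Type*} [NormedAddCommGroup E] [InnerProductSpace ℝ E]

def quadLoss (A : E →L[ℝ] E) (w : E) (z : E × ℝ) : ℝ :=
  (1 / 2) * ⟪w, A w⟫ - z.2 * ⟪z.1, w⟫

theorem isSymmetric_smul_id (γ : ℝ) : (γ • ContinuousLinearMap.id ℝ E).toLinearMap.IsSymmetric :=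
  fun u v => by simp [real_inner_smul_left, real_inner_smul_right]

variable {A : E →L[ℝ] E}

theorem quadLoss_eq_add_inner_add (hA : A.toLinearMap.IsSymmetric) (z : E × ℝ) (u v : E) :
    quadLoss A u z =
      quadLoss A v z + ⟪A v - z.2 • z.1, u - v⟫ + (1 / 2) * ⟪u - v, A (u - v)⟫ := by
  simp only [quadLoss, map_sub, inner_sub_left, inner_sub_right, real_inner_smul_left]
  linear_combination hA v v + (1 / 2 : ℝ) * real_inner_comm (A v) u - (1 / 2 : ℝ) * hA v u

theorem hasGradientAt_quadLoss [CompleteSpace E] (hA : A.toLinearMap.IsSymmetric)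
    (z : E × ℝ) (v : E) :
    HasGradientAt (fun w => quadLoss A w z) (A v - z.2 • z.1) v := by
  rw [hasGradientAt_iff_hasFDerivAt]
  have hquad := (((hasFDerivAt_id v).inner ℝ (A.hasFDerivAt)).const_mul (1 / 2 : ℝ)).sub
    ((innerSL ℝ z.1).hasFDerivAt.const_mul z.2)
  refine hquad.congr_fderiv (ContinuousLinearMap.ext fun u => ?_)
  have hsymm : ⟪v, A u⟫ = ⟪A v, u⟫ := (hA v u).symm
  simp [fderivInnerCLM_apply, hsymm, real_inner_comm u, ← two_mul]

theorem gradient_quadLoss [CompleteSpace E] (hA : A.toLinearMap.IsSymmetric)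
    (z : E × ℝ) (v : E) :
    gradient (fun w => quadLoss A w z) v = A v - z.2 • z.1 :=
  (hasGradientAt_quadLoss hA z v).gradient

theorem quadLoss_strongConvex [CompleteSpace E] (hA : A.toLinearMap.IsSymmetric) {γ : ℝ}
    (hγ : ∀ h, γ * ‖h‖ ^ 2 ≤ ⟪h, A h⟫) (z : E × ℝ) (u v : E) :
    quadLoss A v z + ⟪gradient (fun w => quadLoss A w z) v, u - v⟫ + γ / 2 * ‖u - v‖ ^ 2 ≤
      quadLoss A u z := by
  rw [gradient_quadLoss hA, quadLoss_eq_add_inner_add hA z u v]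
  linarith [hγ (u - v)]

theorem quadLoss_smul_id_smul (γ r y : ℝ) (x : E) :
    quadLoss (γ • ContinuousLinearMap.id ℝ E) (r • x) (x, y) =
      (γ / 2 * r ^ 2 - y * r) * ‖x‖ ^ 2 := by
  simp only [quadLoss, FunLike.coe_smul, Pi.smul_apply, ContinuousLinearMap.id_apply, norm_smul,
    real_inner_smul_right, real_inner_self_eq_norm_sq, Real.norm_eq_abs, mul_pow, sq_abs]
  ring

theorem norm_gradient_quadLoss_sub_le [CompleteSpace E] (hA : A.toLinearMap.IsSymmetric)
    (z : E × ℝ) (u v : E) :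
    ‖gradient (fun w => quadLoss A w z) u - gradient (fun w => quadLoss A w z) v‖ ≤
      ‖A‖ * ‖u - v‖ := by
  rw [gradient_quadLoss hA, gradient_quadLoss hA, sub_sub_sub_cancel_right, ← map_sub]
  exact A.le_opNorm (u - v)

end QuadraticLoss

section LinRecur

def linRecur (ρ a : ℝ) (c : ℕ → ℝ) : ℕ → ℝ
  | 0 => 0
  | t + 1 => ρ * linRecur ρ a c t + a * c (t + 1)

variable {ρ a : ℝ} {c : ℕ → ℝ}

theorem linRecur_nonneg (hρ : 0 ≤ ρ) (ha : 0 ≤ a) (hc : ∀ s, 0 ≤ c s) (t : ℕ) :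
    0 ≤ linRecur ρ a c t := by
  induction t with
  | zero => exact le_rfl
  | succ t ih => exact add_nonneg (mul_nonneg hρ ih) (mul_nonneg ha (hc _))

theorem mul_le_linRecur_succ (hρ : 0 ≤ ρ) (ha : 0 ≤ a) (hc : ∀ s, 0 ≤ c s) (t : ℕ) :
    a * c (t + 1) ≤ linRecur ρ a c (t + 1) :=
  le_add_of_nonneg_left (mul_nonneg hρ (linRecur_nonneg hρ ha hc t))

end LinRecur

section SGD

variable {d : ℕ} {A : EuclideanSpace ℝ (Fin d) →L[ℝ] EuclideanSpace ℝ (Fin d)} {α : ℕ → ℝ}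
  {z : ℕ → EuclideanSpace ℝ (Fin d) × ℝ}

theorem sgd_quadLoss_succ (hA : A.toLinearMap.IsSymmetric) (w0 : EuclideanSpace ℝ (Fin d))
    (t : ℕ) :
    sgd (quadLoss A) α z w0 (t + 1) =
      sgd (quadLoss A) α z w0 t -
        α (t + 1) • (A (sgd (quadLoss A) α z w0 t) - (z (t + 1)).2 • (z (t + 1)).1) := by
  rw [sgd, gradient_quadLoss hA]

theorem sgd_quadLoss_eq_zero_of_labels_eq_zero (hA : A.toLinearMap.IsSymmetric)
    (hz : ∀ s, (z s).2 = 0) (t : ℕ) : sgd (quadLoss A) α z 0 t = 0 := by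
  induction t with
  | zero => rfl
  | succ t ih => simp [sgd_quadLoss_succ hA, ih, hz]

theorem sgd_quadLoss_smul_id (γ a : ℝ) (x : EuclideanSpace ℝ (Fin d)) (c : ℕ → ℝ) (t : ℕ) :
    sgd (quadLoss (γ • ContinuousLinearMap.id ℝ _)) (fun _ => a) (fun s => (x, c s)) 0 t =
      linRecur (1 - a * γ) a c t • x := by
  induction t with
  | zero => simp [sgd, linRecur]
  | succ t ih =>
    rw [sgd_quadLoss_succ (isSymmetric_smul_id γ), ih, linRecur]
    simp only [FunLike.coe_smul, Pi.smul_apply, ContinuousLinearMap.id_apply, smul_smul]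
    module

end SGD

section Sampling

variable {n : ℕ} (hn : 0 < n)

theorem div_le_expA {T s : ℕ} (hs : 0 < s) (hsT : s ≤ T) {g : (ℕ → Fin n) → ℝ} (i : Fin n)
    {a : ℝ} (hg : ∀ idx, 0 ≤ g idx) (hgi : ∀ idx, idx s = i → a ≤ g idx) :
    a / n ≤ expA hn T g := by
  set j : Fin T := ⟨s - 1, by omega⟩
  have hext (ω : Fin T → Fin n) : extSeq hn ω s = ω j := by simp [extSeq, hs, hsT, j]
  have hcard : #{ω : Fin T → Fin n | ω j = i} = n ^ (T - 1) := by
    simpa using Fintype.card_filter_piFinset_const (univ : Finset (Fin n)) j i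
  have hsum : n ^ (T - 1) • a ≤ ∑ ω : Fin T → Fin n, g (extSeq hn ω) :=
    calc n ^ (T - 1) • a = #{ω : Fin T → Fin n | ω j = i} • a := by rw [hcard]
      _ ≤ ∑ ω ∈ {ω : Fin T → Fin n | ω j = i}, g (extSeq hn ω) :=
        card_nsmul_le_sum _ _ _ fun ω hω => hgi _ ((hext ω).trans (mem_filter.1 hω).2)
      _ ≤ ∑ ω : Fin T → Fin n, g (extSeq hn ω) :=
        sum_le_sum_of_subset_of_nonneg (subset_univ _) fun ω _ _ => hg _
  have hnT : (n : ℝ) ^ T = n * n ^ (T - 1) := by rw [← pow_succ', Nat.sub_add_cancel (by omega)]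
  have hn' : (0 : ℝ) < n := by exact_mod_cast hn
  rw [expA, le_div_iff₀ (by positivity), hnT, ← mul_assoc, div_mul_cancel₀ _ hn'.ne', mul_comm]
  simpa using hsum

end Sampling

section TwinDatasets

variable {d n : ℕ} {γ a : ℝ} {x : EuclideanSpace ℝ (Fin d)} {i : Fin n} {idx : ℕ → Fin n}
  {t : ℕ}

theorem sgdDelta_twin_eq :
    sgdDelta (quadLoss (γ • ContinuousLinearMap.id ℝ _)) (fun _ => a) (fun _ => (x, 0))
        (fun j => (x, if j = i then 1 else 0)) idx 0 t =
      -(linRecur (1 - a * γ) a (fun s => if idx s = i then 1 else 0) t • x) := by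
  rw [sgdDelta, sgd_quadLoss_eq_zero_of_labels_eq_zero (isSymmetric_smul_id γ) (fun _ => rfl),
    sgd_quadLoss_smul_id, zero_sub]

theorem le_linRecur_twin (ha : 0 ≤ a) (haγ : a * γ ≤ 1) (h : idx (t + 1) = i) :
    a ≤ linRecur (1 - a * γ) a (fun s => if idx s = i then 1 else 0) (t + 1) := by
  have hc : ∀ s, (0 : ℝ) ≤ if idx s = i then 1 else 0 := fun s => by split_ifs <;> norm_num
  simpa [h] using mul_le_linRecur_succ (sub_nonneg.2 haγ) ha hc t

theorem le_norm_sgdDelta_twin (ha : 0 ≤ a) (haγ : a * γ ≤ 1) (hx : ‖x‖ = 1)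
    (h : idx (t + 1) = i) :
    a ≤ ‖sgdDelta (quadLoss (γ • ContinuousLinearMap.id ℝ _)) (fun _ => a) (fun _ => (x, 0))
      (fun j => (x, if j = i then 1 else 0)) idx 0 (t + 1)‖ := by
  rw [sgdDelta_twin_eq, norm_neg, norm_smul, hx, mul_one, Real.norm_eq_abs]
  exact (le_linRecur_twin ha haγ h).trans (le_abs_self _)

theorem le_abs_quadLoss_sub_twin (hγ : 0 ≤ γ) (ha : 0 ≤ a) (haγ : a * γ ≤ 1) (hx : ‖x‖ = 1)
    (h : idx (t + 1) = i) :
    a ≤ |quadLoss (γ • ContinuousLinearMap.id ℝ _)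
          (sgd (quadLoss (γ • ContinuousLinearMap.id ℝ _)) (fun _ => a)
            (fun _ => (x, 0)) 0 (t + 1)) (x, -1) -
        quadLoss (γ • ContinuousLinearMap.id ℝ _)
          (sgd (quadLoss (γ • ContinuousLinearMap.id ℝ _)) (fun _ => a)
            (fun s => (x, if idx s = i then 1 else 0)) 0 (t + 1)) (x, -1)| := by
  have hr := le_linRecur_twin ha haγ h
  rw [sgd_quadLoss_eq_zero_of_labels_eq_zero (z := fun _ => (x, 0)) (isSymmetric_smul_id γ)
    (fun _ => rfl), sgd_quadLoss_smul_id, quadLoss_smul_id_smul, hx]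
  set r := linRecur (1 - a * γ) a (fun s => if idx s = i then 1 else 0) (t + 1)
  have hquad : 0 ≤ γ / 2 * r ^ 2 := by positivity
  simp only [quadLoss, inner_zero_left, inner_zero_right]
  rw [abs_of_nonpos (by nlinarith)]
  nlinarith

end TwinDatasets

/-- tightness of the O(1/n) stability bound for strongly-convex smooth losses. -/
theorem statement4 (γ : ℝ) (hγ : 0 < γ) (n : ℕ) (hn : 0 < n) :
    ∃ (d : ℕ) (A : EuclideanSpace ℝ (Fin d) →L[ℝ] EuclideanSpace ℝ (Fin d))
      (f : EuclideanSpace ℝ (Fin d) → EuclideanSpace ℝ (Fin d) × ℝ → ℝ)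
      (S S' : Fin n → EuclideanSpace ℝ (Fin d) × ℝ) (i : Fin n)
      (z : EuclideanSpace ℝ (Fin d) × ℝ),
      -- A is symmetric and f is the quadratic loss associated to A
      (∀ u v, ⟪A u, v⟫ = ⟪u, A v⟫) ∧
      (∀ w z, f w z = (1 / 2) * ⟪w, A w⟫ - z.2 * ⟪z.1, w⟫) ∧
      -- f is γ-strongly-convex and β-smooth in w (with β = 2γ), for every data point
      (∀ z u v, f u z ≥ f v z + ⟪gradient (fun w => f w z) v, u - v⟫ + γ / 2 * ‖u - v‖ ^ 2) ∧
      (∀ z u v, ‖gradient (fun w => f w z) u - gradient (fun w => f w z) v‖ ≤ (2 * γ) * ‖u - v‖) ∧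
      -- S, S' are twin datasets differing exactly at index i
      (∀ j, j ≠ i → S j = S' j) ∧ S i ≠ S' i ∧
      -- SGD with constant step size α = 1/(2β) = 1/(4γ) from w₀ = 0
      (∀ T : ℕ, 1 ≤ T →
        expA hn T (fun idx => ‖sgdDelta f (fun _ => 1 / (2 * (2 * γ))) S S' idx 0 T‖) ≥
          1 / (16 * γ * n) ∧
        expA hn T (fun idx =>
            |f (sgd f (fun _ => 1 / (2 * (2 * γ))) (fun s => S (idx s)) 0 T) z -
              f (sgd f (fun _ => 1 / (2 * (2 * γ))) (fun s => S' (idx s)) 0 T) z|) ≥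
          1 / (16 * γ * n) ∧
        -- in particular, uniform stability is at least 1/(16γn)
        (∀ ε : ℝ,
          (∀ (Sa Sb : Fin n → EuclideanSpace ℝ (Fin d) × ℝ) (ia : Fin n),
              (∀ j, j ≠ ia → Sa j = Sb j) →
              ∀ za, expA hn T (fun idx =>
                |f (sgd f (fun _ => 1 / (2 * (2 * γ))) (fun s => Sa (idx s)) 0 T) za -
                  f (sgd f (fun _ => 1 / (2 * (2 * γ))) (fun s => Sb (idx s)) 0 T) za|) ≤ ε) →
            1 / (16 * γ * n) ≤ ε)) := by
  set x : EuclideanSpace ℝ (Fin 1) := EuclideanSpace.single 0 1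
  have hx : ‖x‖ = 1 := by simp [x]
  set A := γ • ContinuousLinearMap.id ℝ (EuclideanSpace ℝ (Fin 1))
  have hA : A.toLinearMap.IsSymmetric := isSymmetric_smul_id γ
  set i : Fin n := ⟨0, hn⟩
  have htwin : ∀ j, j ≠ i → ((x, 0) : _ × ℝ) = (x, if j = i then 1 else 0) :=
    fun j hj => by simp [hj]
  have ha : 0 ≤ 1 / (2 * (2 * γ)) := by positivity
  have haγ : 1 / (2 * (2 * γ)) * γ ≤ 1 := by field_simp; norm_num
  have hbound : 1 / (16 * γ * n) ≤ 1 / (2 * (2 * γ)) / n := by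
    have hn1 : (1 : ℝ) ≤ n := Nat.one_le_cast.2 hn
    rw [div_div]
    exact one_div_le_one_div_of_le (by positivity) (by nlinarith)
  refine ⟨1, A, quadLoss A, fun _ => (x, 0), fun j => (x, if j = i then 1 else 0), i, (x, -1),
    hA, fun _ _ => rfl, quadLoss_strongConvex hA fun h => ?_,
    fun z u v => (norm_gradient_quadLoss_sub_le hA z u v).trans ?_, htwin, by simp,
    fun T hT => ?_⟩
  · simp [A, real_inner_smul_right]
  · have hAnorm : ‖A‖ = γ := by simp [A, norm_smul, hγ.le]
    rw [hAnorm]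
    gcongr
    linarith
  obtain ⟨t, rfl⟩ : ∃ t, T = t + 1 := ⟨T - 1, by omega⟩
  have hΔ := hbound.trans (div_le_expA hn t.succ_pos le_rfl i (fun _ => norm_nonneg _)
    fun idx h => le_norm_sgdDelta_twin ha haγ hx h)
  have hf := hbound.trans (div_le_expA hn t.succ_pos le_rfl i (fun _ => abs_nonneg _)
    fun idx h => le_abs_quadLoss_sub_twin hγ.le ha haγ hx h)
  exact ⟨hΔ, hf, fun ε hε => hf.trans (hε _ _ i htwin (x, -1))⟩
end
end

section
/- Let t_0 < T be positive integers, let 0 < a ≤ 0.01, and let y > 0. Suppose a real sequence satisfies x_{t_0} = 0 and x_{t+1} = (1 + a/(0.99·t))·x_t + y/t for every t with t_0 ≤ t ≤ T − 1. Then x_T ≥ y · T^a · Σ_{t=t_0+1}^{T} t^{−(1+a)}. -/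
/-!
Bernoulli's inequality `(1 + 1/t) ^ a ≤ 1 + a/t` for `0 ≤ a ≤ 1` shows that
`L t = y t^a ∑_{s=t₀+1}^{t} s^{-(1+a)}` is a sub-solution of the recursion: passing from `t` to
`t + 1` multiplies its first factor by at most `1 + a/(0.99 t)` and adds `y/(t+1) ≤ y/t`.
Since `x` and `L` both vanish at `t₀` and the recursion is monotone in `x_t`, `L ≤ x`.
-/

open Finset

theorem le_of_linear_recurrence {x L r b : ℕ → ℝ} {t0 T : ℕ}
    (hr : ∀ t, t0 ≤ t → t < T → 0 ≤ r t)
    (hL : ∀ t, t0 ≤ t → t < T → L (t + 1) ≤ r t * L t + b t)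
    (hx : ∀ t, t0 ≤ t → t < T → r t * x t + b t ≤ x (t + 1))
    (hinit : L t0 ≤ x t0) :
    ∀ t, t0 ≤ t → t ≤ T → L t ≤ x t := by
  intro t ht
  induction t, ht using Nat.le_induction with
  | base => exact fun _ => hinit
  | succ t ht ih =>
    intro htT
    calc L (t + 1) ≤ r t * L t + b t := hL t ht htT
      _ ≤ r t * x t + b t := by gcongr; exacts [hr t ht htT, ih (by omega)]
      _ ≤ x (t + 1) := hx t ht htT

theorem add_one_rpow_le_one_add_div_mul_rpow {a c t : ℝ} (ha : 0 ≤ a) (ha' : a ≤ 1)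
    (hc : 0 < c) (hc' : c ≤ 1) (ht : 0 < t) :
    (t + 1) ^ a ≤ (1 + a / (c * t)) * t ^ a := by
  have bernoulli : (1 + t⁻¹) ^ a ≤ 1 + a * t⁻¹ :=
    rpow_one_add_le_one_add_mul_self (by linarith [inv_pos.2 ht]) ha ha'
  have hdiv : a * t⁻¹ ≤ a / (c * t) := by
    rw [← div_eq_mul_inv]
    exact div_le_div_of_nonneg_left ha (by positivity) (mul_le_of_le_one_left ht.le hc')
  calc (t + 1) ^ a = (1 + t⁻¹) ^ a * t ^ a := by
        rw [← Real.mul_rpow (by positivity) ht.le, add_mul, inv_mul_cancel₀ ht.ne', one_mul,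
          add_comm]
    _ ≤ (1 + a / (c * t)) * t ^ a := by gcongr; linarith

theorem rpow_mul_sum_Icc_rpow_succ_le {a y r : ℝ} {t0 t : ℕ} (hy : 0 ≤ y) (ht0 : t0 ≤ t)
    (ht : 0 < t) (hr : ((t : ℝ) + 1) ^ a ≤ r * (t : ℝ) ^ a) :
    y * ((t + 1 : ℕ) : ℝ) ^ a * ∑ s ∈ Icc (t0 + 1) (t + 1), (s : ℝ) ^ (-(1 + a)) ≤
      r * (y * (t : ℝ) ^ a * ∑ s ∈ Icc (t0 + 1) t, (s : ℝ) ^ (-(1 + a))) + y / t := by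
  set S := ∑ s ∈ Icc (t0 + 1) t, (s : ℝ) ^ (-(1 + a))
  have hS : 0 ≤ S := sum_nonneg fun s _ => by positivity
  have htR : (0 : ℝ) < t := Nat.cast_pos.2 ht
  have hlast : ((t : ℝ) + 1) ^ a * ((t : ℝ) + 1) ^ (-(1 + a)) = ((t : ℝ) + 1)⁻¹ := by
    rw [← Real.rpow_add (by positivity), show a + -(1 + a) = -1 by ring, Real.rpow_neg_one]
  have hinv : ((t : ℝ) + 1)⁻¹ ≤ (t : ℝ)⁻¹ := inv_anti₀ htR (by linarith)
  rw [sum_Icc_succ_top (by omega)]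
  push_cast
  calc y * ((t : ℝ) + 1) ^ a * (S + ((t : ℝ) + 1) ^ (-(1 + a)))
        = y * ((t : ℝ) + 1) ^ a * S + y * ((t : ℝ) + 1)⁻¹ := by rw [← hlast]; ring
    _ ≤ y * (r * (t : ℝ) ^ a) * S + y * (t : ℝ)⁻¹ := by gcongr
    _ = r * (y * (t : ℝ) ^ a * S) + y / t := by ring

/-- the key recursion estimate for the non-convex divergence lower bound. -/
theorem statement7 (t0 T : ℕ) (h0 : 0 < t0) (hT : t0 < T) (a y : ℝ)
    (ha : 0 < a) (ha' : a ≤ 0.01) (hy : 0 < y)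
    (x : ℕ → ℝ) (hx0 : x t0 = 0)
    (hrec : ∀ t, t0 ≤ t → t < T → x (t + 1) = (1 + a / (0.99 * t)) * x t + y / t) :
    x T ≥ y * (T : ℝ) ^ a * ∑ t ∈ Finset.Icc (t0 + 1) T, (t : ℝ) ^ (-(1 + a)) := by
  refine le_of_linear_recurrence
    (L := fun n => y * (n : ℝ) ^ a * ∑ t ∈ Icc (t0 + 1) n, (t : ℝ) ^ (-(1 + a)))
    (r := fun t => 1 + a / (0.99 * t)) (b := fun t => y / t)
    (fun t ht _ => ?_) (fun t ht _ => ?_) (fun t ht htT => (hrec t ht htT).ge)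
    (by simp [hx0]) T hT.le le_rfl
  all_goals have htR : (0 : ℝ) < t := Nat.cast_pos.2 (by omega)
  · positivity
  · exact rpow_mul_sum_Icc_rpow_succ_le hy.le ht (by omega) <|
      add_one_rpow_le_one_add_div_mul_rpow ha.le (by linarith) (by norm_num) (by norm_num) htR
end

section
/- For every integer n ≥ 1 there exist β > 0, a constant a > 0, a dimension d, a loss function f(w; z) on ℝ^d which as a function of w is β-smooth for every data point z but is not convex, and twin datasets S, S' of size n, such that for every horizon T and every 1 ≤ t_0 ≤ T, coupled uniform-sampling SGD with step sizes α_t = a/(0.99·β·t) initialized at w_0 = w_0' = 0 satisfies E_A[‖Δ_T‖ | Δ_{t_0} ≠ 0] ≥ (1/(2n))·(T/t_0)^a. -/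
open Finset
open scoped RealInnerProductSpace

noncomputable section

/-!
Take the concave loss `f(w; z) = ⟪z₁, w⟫ - ‖w‖² / 2`, whose gradient `z₁ - w` is 1-Lipschitz. Its
SGD step `w ↦ (1 + α_t) w - α_t z₁` is expanding. Let `S` put `(u, 0)` at index `i` and `0`
elsewhere, with `‖u‖ = 1`, and `S' = 0`. The run on `S'` stays at `0`, so `Δ_t` is the run on `S`.
If `i₁ = i`, the first step moves to `-α₁ u`, and afterwards every step only pushes further along
`-u`; with `α_t ≥ 1 / t` this gives `‖Δ_t‖ ≥ (t + 1) / 2`. This event has probability `1 / n` and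
forces `Δ_{t₀} ≠ 0`, so it alone contributes `(T + 1) / (2n) ≥ (T / t₀) / (2n)` to the
conditional expectation (with `β = a = 1`).
-/

section NegQuadLoss

variable {F : Type*} [NormedAddCommGroup F] [InnerProductSpace ℝ F]

def negQuadLoss (w : F) (z : F × ℝ) : ℝ := ⟪z.1, w⟫ - ‖w‖ ^ 2 / 2

theorem hasGradientAt_negQuadLoss [CompleteSpace F] (z : F × ℝ) (w : F) :
    HasGradientAt (negQuadLoss · z) (z.1 - w) w := by
  have h := (innerSL ℝ z.1).hasFDerivAt.sub
    (HasFDerivAt.mul_const (hasStrictFDerivAt_norm_sq w).hasFDerivAt (2⁻¹ : ℝ))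
  rw [hasGradientAt_iff_hasFDerivAt]
  refine h.congr_fderiv ?_ |>.congr_of_eventuallyEq (.of_forall fun v => ?_)
  · ext v
    simp [real_inner_comm]
  · simp [negQuadLoss, div_eq_mul_inv]

theorem gradient_negQuadLoss [CompleteSpace F] (z : F × ℝ) (w : F) :
    gradient (negQuadLoss · z) w = z.1 - w :=
  (hasGradientAt_negQuadLoss z w).gradient

theorem norm_sub_gradient_negQuadLoss [CompleteSpace F] (z : F × ℝ) (u v : F) :
    ‖gradient (negQuadLoss · z) u - gradient (negQuadLoss · z) v‖ = ‖u - v‖ := by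
  rw [gradient_negQuadLoss, gradient_negQuadLoss, sub_sub_sub_cancel_left, norm_sub_rev]

theorem not_convexOn_negQuadLoss [Nontrivial F] (z : F × ℝ) :
    ¬ ConvexOn ℝ Set.univ (negQuadLoss · z) := by
  intro h
  obtain ⟨x, hx⟩ := exists_ne (0 : F)
  -- the linear part cancels between `x` and `-x`, leaving `0 ≤ -‖x‖² / 2`
  have hmid := h.2 (Set.mem_univ x) (Set.mem_univ (-x)) (by norm_num : (0 : ℝ) ≤ 1 / 2)
    (by norm_num : (0 : ℝ) ≤ 1 / 2) (by norm_num)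
  have hx' : 0 < ‖x‖ := norm_pos_iff.mpr hx
  simp only [negQuadLoss, smul_neg, add_neg_cancel, inner_zero_right, inner_neg_right, norm_neg,
    norm_zero, smul_eq_mul] at hmid
  nlinarith

end NegQuadLoss

section SGD

variable {d : ℕ} (α : ℕ → ℝ)

theorem sgd_negQuadLoss_succ (z : ℕ → EuclideanSpace ℝ (Fin d) × ℝ)
    (w0 : EuclideanSpace ℝ (Fin d)) (t : ℕ) :
    sgd negQuadLoss α z w0 (t + 1) =
      (1 + α (t + 1)) • sgd negQuadLoss α z w0 t - α (t + 1) • (z (t + 1)).1 := by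
  rw [sgd, gradient_negQuadLoss]
  module

theorem sgd_negQuadLoss_zero_data (t : ℕ) :
    sgd negQuadLoss α (fun _ => (0 : EuclideanSpace ℝ (Fin d) × ℝ)) 0 t = 0 := by
  induction t with
  | zero => rfl
  | succ t ih => simp [sgd_negQuadLoss_succ, ih]

variable {α} {u : EuclideanSpace ℝ (Fin d)} {z : ℕ → EuclideanSpace ℝ (Fin d) × ℝ}

theorem exists_sgd_negQuadLoss_eq_neg_smul (hα : ∀ t : ℕ, 1 ≤ t → 1 / (t : ℝ) ≤ α t)
    (hz : ∀ t, ∃ b : ℝ, 0 ≤ b ∧ (z t).1 = b • u) (hz1 : (z 1).1 = u) :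
    ∀ t : ℕ, 1 ≤ t → ∃ c : ℝ, ((t : ℝ) + 1) / 2 ≤ c ∧ sgd negQuadLoss α z 0 t = -c • u := by
  intro t ht
  induction t, ht using Nat.le_induction with
  | base =>
    refine ⟨α 1, by simpa using hα 1 le_rfl, ?_⟩
    rw [sgd_negQuadLoss_succ, hz1]
    simp [sgd]
  | succ t ht ih =>
    obtain ⟨c, hc, hwt⟩ := ih
    obtain ⟨b, hb, hzb⟩ := hz (t + 1)
    have hαt : 1 / ((t : ℝ) + 1) ≤ α (t + 1) := by exact_mod_cast hα (t + 1) (by omega)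
    -- the expansion factor `1 + α (t + 1)` alone adds at least `1 / 2` to the coefficient
    have hαc : 1 / 2 ≤ α (t + 1) * c := by
      calc (1 : ℝ) / 2 = 1 / ((t : ℝ) + 1) * (((t : ℝ) + 1) / 2) := by field_simp
        _ ≤ α (t + 1) * c := by gcongr; exact le_trans (by positivity) hαt
    refine ⟨(1 + α (t + 1)) * c + α (t + 1) * b, ?_, ?_⟩
    · push_cast
      nlinarith [mul_nonneg (le_trans (by positivity) hαt) hb]
    · rw [sgd_negQuadLoss_succ, hwt, hzb]
      module

theorem le_norm_sgd_negQuadLoss (hα : ∀ t : ℕ, 1 ≤ t → 1 / (t : ℝ) ≤ α t)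
    (hz : ∀ t, ∃ b : ℝ, 0 ≤ b ∧ (z t).1 = b • u) (hz1 : (z 1).1 = u) {t : ℕ} (ht : 1 ≤ t) :
    ((t : ℝ) + 1) / 2 * ‖u‖ ≤ ‖sgd negQuadLoss α z 0 t‖ := by
  obtain ⟨c, hc, hw⟩ := exists_sgd_negQuadLoss_eq_neg_smul hα hz hz1 t ht
  rw [hw, norm_smul, norm_neg, Real.norm_of_nonneg (le_trans (by positivity) hc)]
  gcongr

theorem le_norm_sgdDelta_negQuadLoss_single {n : ℕ} (hα : ∀ t : ℕ, 1 ≤ t → 1 / (t : ℝ) ≤ α t)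
    {i : Fin n} {idx : ℕ → Fin n} (h1 : idx 1 = i) {t : ℕ} (ht : 1 ≤ t) :
    ((t : ℝ) + 1) / 2 * ‖u‖ ≤ ‖sgdDelta negQuadLoss α (Pi.single i (u, 0) : Fin n → _ × ℝ) 0 idx 0 t‖ := by
  have hS : ∀ j, ∃ b : ℝ, 0 ≤ b ∧ ((Pi.single i (u, 0) : Fin n → _ × ℝ) j).1 = b • u := fun j => by
    by_cases hj : j = i
    · exact ⟨1, zero_le_one, by simp [hj]⟩
    · exact ⟨0, le_rfl, by simp [hj]⟩
  simpa [sgdDelta, sgd_negQuadLoss_zero_data] using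
    le_norm_sgd_negQuadLoss hα (fun s => hS (idx s)) (by simp [h1]) ht

end SGD

theorem card_filter_apply_zero_eq {α : Type*} [Fintype α] [DecidableEq α] (m : ℕ) (a : α) :
    #{ω : Fin (m + 1) → α | ω 0 = a} = Fintype.card α ^ m := by
  have h : ({ω : Fin (m + 1) → α | ω 0 = a} : Finset _) =
      univ.map ⟨Fin.cons a, Fin.cons_right_injective (α := fun _ => α) a⟩ := by
    ext ω
    simp only [mem_filter, mem_univ, true_and, mem_map, Function.Embedding.coeFn_mk]
    exact ⟨fun h => ⟨Fin.tail ω, h ▸ Fin.cons_self_tail ω⟩, fun ⟨_, h⟩ => h ▸ rfl⟩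
  rw [h, card_map, card_univ, Fintype.card_fun, Fintype.card_fin]

theorem extSeq_one {n T : ℕ} (hn : 0 < n) (hT : 0 < T) (ω : Fin T → Fin n) :
    extSeq hn ω 1 = ω ⟨0, hT⟩ := by
  simp [extSeq, Nat.one_le_iff_ne_zero.mpr hT.ne']

open Classical in
theorem div_le_expACond_of_first_index {n T : ℕ} (hn : 0 < n) (hT : 0 < T)
    {g : (ℕ → Fin n) → ℝ} {E : (ℕ → Fin n) → Prop} (i : Fin n) {c : ℝ}
    (hg : ∀ idx, 0 ≤ g idx) (hE : ∀ idx, idx 1 = i → E idx)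
    (hgc : ∀ idx, idx 1 = i → c ≤ g idx) :
    c / n ≤ expACond hn T g E := by
  obtain ⟨m, rfl⟩ : ∃ m, T = m + 1 := ⟨T - 1, by omega⟩
  set F := univ.filter (fun ω : Fin (m + 1) → Fin n => E (extSeq hn ω))
  set A := univ.filter (fun ω : Fin (m + 1) → Fin n => ω 0 = i)
  have hfirst : ∀ ω ∈ A, extSeq hn ω 1 = i := fun ω hω => by
    rw [extSeq_one hn hT]
    exact (mem_filter.mp hω).2
  have hAF : A ⊆ F := fun ω hω => mem_filter.mpr ⟨mem_univ ω, hE _ (hfirst ω hω)⟩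
  have hA : (#A : ℝ) = (n : ℝ) ^ m := by
    simp only [A, card_filter_apply_zero_eq, Fintype.card_fin, Nat.cast_pow]
  have hF : (#F : ℝ) ≤ (n : ℝ) ^ (m + 1) := by
    exact_mod_cast (card_filter_le _ _).trans_eq (by simp)
  have hFpos : (0 : ℝ) < #F := by
    exact_mod_cast (card_pos.mpr ⟨fun _ => i, hAF (by simp [A])⟩)
  have hn' : (0 : ℝ) < n := by exact_mod_cast hn
  calc c / n = #A * c / (n : ℝ) ^ (m + 1) := by rw [hA]; field_simp; ring
    _ ≤ (∑ ω ∈ A, g (extSeq hn ω)) / #F := by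
      apply div_le_div₀ (sum_nonneg fun ω _ => hg _) _ hFpos hF
      simpa using card_nsmul_le_sum A _ c fun ω hω => hgc _ (hfirst ω hω)
    _ ≤ (∑ ω ∈ F, g (extSeq hn ω)) / #F := by
      gcongr
      exact fun ω _ _ => hg _

/-- conditional divergence lower bound for a non-convex smooth loss. -/
theorem statement8 (n : ℕ) (hn : 0 < n) :
    ∃ (β a : ℝ), 0 < β ∧ 0 < a ∧
    ∃ (d : ℕ) (f : EuclideanSpace ℝ (Fin d) → EuclideanSpace ℝ (Fin d) × ℝ → ℝ)
      (S S' : Fin n → EuclideanSpace ℝ (Fin d) × ℝ) (i : Fin n),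
      -- f is β-smooth in w for every data point, but not convex
      (∀ z u v, ‖gradient (fun w => f w z) u - gradient (fun w => f w z) v‖ ≤ β * ‖u - v‖) ∧
      (∃ z, ¬ ConvexOn ℝ Set.univ (fun w => f w z)) ∧
      -- S, S' are twin datasets differing exactly at index i
      (∀ j, j ≠ i → S j = S' j) ∧ S i ≠ S' i ∧
      -- SGD with step sizes α_t = a/(0.99βt) from w₀ = 0
      (∀ T t0 : ℕ, 1 ≤ t0 → t0 ≤ T →
        expACond hn T
            (fun idx => ‖sgdDelta f (fun t => a / (0.99 * β * t)) S S' idx 0 T‖)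
            (fun idx => sgdDelta f (fun t => a / (0.99 * β * t)) S S' idx 0 t0 ≠ 0) ≥
          (1 / (2 * n)) * ((T : ℝ) / t0) ^ a) := by
  let i : Fin n := ⟨0, hn⟩
  let u : EuclideanSpace ℝ (Fin 1) := EuclideanSpace.single 0 1
  let S : Fin n → EuclideanSpace ℝ (Fin 1) × ℝ := Pi.single i (u, 0)
  have hu : ‖u‖ = 1 := by simp [u]
  have hα : ∀ t : ℕ, 1 ≤ t → 1 / (t : ℝ) ≤ 1 / (0.99 * 1 * t) := fun t ht => by
    have ht' : (1 : ℝ) ≤ t := by exact_mod_cast ht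
    exact one_div_le_one_div_of_le (by positivity) (by linarith)
  have hgrowth : ∀ idx : ℕ → Fin n, idx 1 = i → ∀ t : ℕ, 1 ≤ t →
      ((t : ℝ) + 1) / 2 ≤ ‖sgdDelta negQuadLoss (fun t => 1 / (0.99 * 1 * t)) S 0 idx 0 t‖ :=
    fun idx h1 t ht => by
      simpa [hu] using le_norm_sgdDelta_negQuadLoss_single hα (u := u) h1 ht
  refine ⟨1, 1, one_pos, one_pos, 1, negQuadLoss, S, 0, i, fun z v w => ?_,
    ⟨0, not_convexOn_negQuadLoss 0⟩, fun j hj => Pi.single_eq_of_ne hj _, ?_,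
    fun T t0 ht0 htT => ?_⟩
  · rw [norm_sub_gradient_negQuadLoss, one_mul]
  · simpa [S] using fun h => by simp [h] at hu
  · have hbound : 1 / (2 * n) * ((T : ℝ) / t0) ^ (1 : ℝ) ≤ ((T : ℝ) + 1) / 2 / n := by
      have ht0' : (1 : ℝ) ≤ t0 := by exact_mod_cast ht0
      rw [Real.rpow_one, div_div, one_div_mul_eq_div]
      gcongr
      exact (div_le_self (by positivity) ht0').trans (by linarith)
    refine hbound.trans (div_le_expACond_of_first_index hn (by omega) i
      (fun _ => norm_nonneg _) (fun idx h1 => ?_) (fun idx h1 => hgrowth idx h1 T (by omega)))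
    exact norm_pos_iff.mp (lt_of_lt_of_le (by positivity) (hgrowth idx h1 t0 ht0))
end
end

section
/- Let n ≥ 1 be an integer, let (i_t)_{t≥1} be i.i.d. uniform random variables on {1, …, n}, fix an index i, and let H = min{t ≥ 1 : i_t = i} be the hitting time of index i. Then for all positive integers s ≤ t: P[H > s | H ≤ t] ≤ n/(n + s). Equivalently, (1 − 1/n)^s · (1 − (1 − 1/n)^{t−s}) / (1 − (1 − 1/n)^t) ≤ n/(n + s). -/
open Finset

lemma key_nat (a s : ℕ) : (a + 1 + s) * a ^ s ≤ (a + 1) ^ (s + 1) := by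
  induction s with
  | zero => simp
  | succ s ih =>
    have h1 : a ^ (s+1) ≤ (a+1) ^ (s+1) := Nat.pow_le_pow_left (Nat.le_succ a) _
    calc (a + 1 + (s+1)) * a ^ (s+1) = ((a + 1 + s) * a ^ s) * a + a ^ (s+1) := by ring
    _ ≤ (a+1)^(s+1) * a + (a+1)^(s+1) := Nat.add_le_add (Nat.mul_le_mul_right a ih) h1
    _ = (a+1)^(s+2) := by ring

lemma card_lt_filter (t s : ℕ) (h : s ≤ t) :
    (univ.filter fun k : Fin t => (k : ℕ) < s).card = s := by
  have h2 : ∀ m ∈ Finset.range s, m < t := fun m hm => lt_of_lt_of_le (Finset.mem_range.1 hm) h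
  have he : (univ.filter fun k : Fin t => (k : ℕ) < s) = (Finset.range s).attachFin h2 := by
    ext k; simp [Finset.mem_attachFin]
  rw [he, Finset.card_attachFin, Finset.card_range]

/-- part (i) of the hitting-probability lemma. For i.i.d. uniform indices
`i_1,…,i_t` on `{1,…,n}` (modeled by the uniform counting measure on `Fin t → Fin n`) and
hitting time `H = min{k : i_k = i}`, we have `P[H > s | H ≤ t] ≤ n/(n+s)`, and equivalently
the closed-form inequality. -/
theorem statement11 (n s t : ℕ) (hn : 1 ≤ n) (hs : 1 ≤ s) (hst : s ≤ t) (i : Fin n) :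
    (((univ.filter (fun ω : Fin t → Fin n =>
          (∀ k : Fin t, (k : ℕ) < s → ω k ≠ i) ∧ ∃ k, ω k = i)).card : ℝ) /
        ((univ.filter (fun ω : Fin t → Fin n => ∃ k, ω k = i)).card : ℝ) ≤
      (n : ℝ) / (n + s)) ∧
    (1 - 1 / (n : ℝ)) ^ s * (1 - (1 - 1 / (n : ℝ)) ^ (t - s)) / (1 - (1 - 1 / (n : ℝ)) ^ t) ≤
      (n : ℝ) / (n + s) := by
  have ht : 1 ≤ t := le_trans hs hst
  have hM1 : (1 : ℝ) ≤ (n : ℝ) := by exact_mod_cast hn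
  have hMpos : (0 : ℝ) < (n : ℝ) := lt_of_lt_of_le one_pos hM1
  have hA : ((n - 1 : ℕ) : ℝ) = (n : ℝ) - 1 := by rw [Nat.cast_sub hn]; norm_num
  have hA0 : (0 : ℝ) ≤ (n : ℝ) - 1 := by linarith
  have hAM : (n : ℝ) - 1 < (n : ℝ) := by linarith
  have hMs : (0 : ℝ) < (n : ℝ) + s := by positivity
  -- key inequality in ℝ
  have key : ((n : ℝ) + s) * ((n : ℝ) - 1) ^ s ≤ (n : ℝ) ^ (s + 1) := by
    have hk := key_nat (n - 1) s
    have h2 : n - 1 + 1 = n := Nat.succ_pred_eq_of_pos hn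
    rw [h2] at hk
    calc ((n : ℝ) + s) * ((n : ℝ) - 1) ^ s = (((n + s) * (n - 1) ^ s : ℕ) : ℝ) := by
          push_cast [hA]; ring
    _ ≤ ((n ^ (s + 1) : ℕ) : ℝ) := by exact_mod_cast hk
    _ = (n : ℝ) ^ (s + 1) := by push_cast; ring
  -- cardinalities
  have C0 : (univ.filter fun ω : Fin t → Fin n => ∀ k, ω k ≠ i).card = (n - 1) ^ t := by
    have he : (univ.filter fun ω : Fin t → Fin n => ∀ k, ω k ≠ i)
        = Fintype.piFinset (fun _ : Fin t => univ.erase i) := by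
      ext ω; simp [Fintype.mem_piFinset]
    rw [he, Fintype.card_piFinset]
    simp [Finset.card_erase_of_mem]
  have C1 : (univ.filter fun ω : Fin t → Fin n => ∀ k : Fin t, (k : ℕ) < s → ω k ≠ i).card
      = (n - 1) ^ s * n ^ (t - s) := by
    have he : (univ.filter fun ω : Fin t → Fin n => ∀ k : Fin t, (k : ℕ) < s → ω k ≠ i)
        = Fintype.piFinset (fun k : Fin t =>
            if (k : ℕ) < s then univ.erase i else univ) := by
      ext ω
      simp only [Fintype.mem_piFinset, mem_filter, mem_univ, true_and]
      constructor
      · intro h k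
        by_cases hk : (k : ℕ) < s
        · simp [hk, h k hk]
        · simp [hk]
      · intro h k hk
        have := h k
        simpa [hk] using this
    rw [he, Fintype.card_piFinset]
    simp only [apply_ite Finset.card, Finset.card_erase_of_mem (mem_univ i), card_univ,
      Fintype.card_fin]
    rw [Finset.prod_ite _ _]
    simp only [Finset.prod_const]
    rw [card_lt_filter t s hst]
    have hc := Finset.card_filter_add_card_filter_not
      (s := (univ : Finset (Fin t))) (p := fun k : Fin t => (k : ℕ) < s)
    rw [card_lt_filter t s hst, card_univ, Fintype.card_fin] at hc
    rw [Nat.add_comm] at hc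
    rw [Nat.eq_sub_of_add_eq hc]
  have Cden : (univ.filter fun ω : Fin t → Fin n => ∃ k, ω k = i).card
      = n ^ t - (n - 1) ^ t := by
    have h := Finset.card_filter_add_card_filter_not
      (s := (univ : Finset (Fin t → Fin n))) (p := fun ω => ∀ k, ω k ≠ i)
    have hcu : (univ : Finset (Fin t → Fin n)).card = n ^ t := by simp [card_univ]
    have heq : (univ.filter fun ω : Fin t → Fin n => ¬ ∀ k, ω k ≠ i)
        = (univ.filter fun ω : Fin t → Fin n => ∃ k, ω k = i) := by
      ext ω; simp
    rw [C0, heq, hcu, Nat.add_comm] at h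
    exact Nat.eq_sub_of_add_eq h
  have Cnum : (univ.filter (fun ω : Fin t → Fin n =>
        (∀ k : Fin t, (k : ℕ) < s → ω k ≠ i) ∧ ∃ k, ω k = i)).card
      = (n - 1) ^ s * n ^ (t - s) - (n - 1) ^ t := by
    have h := Finset.card_filter_add_card_filter_not
      (s := univ.filter fun ω : Fin t → Fin n => ∀ k : Fin t, (k : ℕ) < s → ω k ≠ i)
      (p := fun ω => ∀ k, ω k ≠ i)
    rw [Finset.filter_filter, Finset.filter_filter] at h
    have h1 : (univ.filter fun ω : Fin t → Fin n =>
        (∀ k : Fin t, (k : ℕ) < s → ω k ≠ i) ∧ ∀ k, ω k ≠ i)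
        = (univ.filter fun ω : Fin t → Fin n => ∀ k, ω k ≠ i) := by
      ext ω; simp only [mem_filter, mem_univ, true_and]; tauto
    have h2 : (univ.filter fun ω : Fin t → Fin n =>
        (∀ k : Fin t, (k : ℕ) < s → ω k ≠ i) ∧ ¬ ∀ k, ω k ≠ i)
        = (univ.filter (fun ω : Fin t → Fin n =>
            (∀ k : Fin t, (k : ℕ) < s → ω k ≠ i) ∧ ∃ k, ω k = i)) := by
      ext ω; simp
    rw [h1, h2, C1, C0, Nat.add_comm] at h
    exact Nat.eq_sub_of_add_eq h
  -- nat inequalities for cast subtraction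
  have hn1 : (n - 1) ^ t ≤ (n - 1) ^ s * n ^ (t - s) := by
    calc (n-1)^t = (n-1)^s * (n-1)^(t-s) := by rw [← pow_add, Nat.add_sub_cancel' hst]
    _ ≤ (n-1)^s * n^(t-s) := Nat.mul_le_mul_left _ (Nat.pow_le_pow_left (Nat.sub_le n 1) _)
  have hn2 : (n - 1) ^ t ≤ n ^ t := Nat.pow_le_pow_left (Nat.sub_le n 1) _
  have hden : ((n : ℝ) - 1) ^ t < (n : ℝ) ^ t :=
    pow_lt_pow_left₀ hAM hA0 (Nat.one_le_iff_ne_zero.mp ht)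
  constructor
  · rw [Cnum, Cden, Nat.cast_sub hn1, Nat.cast_sub hn2]
    push_cast [hA]
    rw [div_le_div_iff₀ (by linarith) hMs]
    have key2 : ((n : ℝ) + s) * ((n : ℝ) - 1) ^ s * (n : ℝ) ^ (t - s)
        ≤ (n : ℝ) ^ (s + 1) * (n : ℝ) ^ (t - s) :=
      mul_le_mul_of_nonneg_right key (by positivity)
    have hpow : (n : ℝ) ^ (s + 1) * (n : ℝ) ^ (t - s) = (n : ℝ) * (n : ℝ) ^ t := by
      rw [← pow_add,
        show s + 1 + (t - s) = t + 1 from by rw [Nat.add_right_comm, Nat.add_sub_cancel' hst]]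
      ring
    have hAt : (0 : ℝ) ≤ ((n : ℝ) - 1) ^ t := by positivity
    nlinarith [mul_nonneg hAt (le_of_lt hMs), mul_nonneg hAt hMpos.le,
      mul_nonneg hAt (Nat.cast_nonneg s : (0:ℝ) ≤ (s : ℝ))]
  · have hq0 : (0 : ℝ) ≤ 1 - 1 / (n : ℝ) := by
      have : 1 / (n : ℝ) ≤ 1 := by rw [div_le_one hMpos]; exact hM1
      linarith
    have hq1 : 1 - 1 / (n : ℝ) < 1 := by
      have : (0 : ℝ) < 1 / (n : ℝ) := by positivity
      linarith
    have hqt : (1 - 1 / (n : ℝ)) ^ t < 1 := pow_lt_one₀ hq0 hq1 (Nat.one_le_iff_ne_zero.mp ht)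
    have hmono : (1 - 1 / (n : ℝ)) ^ t ≤ (1 - 1 / (n : ℝ)) ^ (t - s) :=
      pow_le_pow_of_le_one hq0 hq1.le (Nat.sub_le t s)
    have step1 : (1 - 1 / (n : ℝ)) ^ s * (1 - (1 - 1 / (n : ℝ)) ^ (t - s))
        / (1 - (1 - 1 / (n : ℝ)) ^ t) ≤ (1 - 1 / (n : ℝ)) ^ s := by
      rw [div_le_iff₀ (by linarith)]
      have h1 : (0 : ℝ) ≤ (1 - 1 / (n : ℝ)) ^ s := by positivity
      nlinarith
    have hqA : 1 - 1 / (n : ℝ) = ((n : ℝ) - 1) / (n : ℝ) := by field_simp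
    have step2 : (1 - 1 / (n : ℝ)) ^ s ≤ (n : ℝ) / ((n : ℝ) + s) := by
      rw [hqA, div_pow, div_le_div_iff₀ (by positivity) hMs]
      calc ((n : ℝ) - 1) ^ s * ((n : ℝ) + s) = ((n : ℝ) + s) * ((n : ℝ) - 1) ^ s := by ring
      _ ≤ (n : ℝ) ^ (s + 1) := key
      _ = (n : ℝ) * (n : ℝ) ^ s := by ring
    exact le_trans step1 step2
end

section
/- Let n ≥ 1 be an integer, let (i_t)_{t≥1} be i.i.d. uniform random variables on {1, …, n}, fix an index i, and let H = min{t ≥ 1 : i_t = i} be the hitting time of index i. Then for every positive integer s and every real c ≥ 1 such that t = c·s is a positive integer: P[H ≤ s | H ≤ t] ≤ (1/c)·(1 + t/n). Equivalently, (1 − (1 − 1/n)^s) / (1 − (1 − 1/n)^t) ≤ (s/t)·(1 + t/n). -/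
open Finset

private theorem prod_ite_lt' (t m a b : ℕ) (hm : m ≤ t) :
    (∏ x : Fin t, if (x:ℕ) < m then a else b) = a ^ m * b ^ (t - m) := by
  have hf : (univ.filter (fun x : Fin t => (x:ℕ) < m)).card = m := by
    rw [Finset.card_filter, Fin.sum_univ_eq_sum_range (fun k => if k < m then 1 else 0),
      ← Finset.card_filter, show (range t).filter (fun i => i < m) = range m from by
        ext j; simp; omega, Finset.card_range]
  rw [Finset.prod_ite, Finset.prod_const, Finset.prod_const, hf]
  congr 2
  have h2 := Finset.card_filter_add_card_filter_not (s := (univ : Finset (Fin t)))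
    (p := fun x : Fin t => (x:ℕ) < m)
  rw [hf, Finset.card_univ, Fintype.card_fin] at h2
  omega

private theorem card_avoid' (n t m : ℕ) (i : Fin n) (hm : m ≤ t) :
    (univ.filter (fun ω : Fin t → Fin n => ∀ k : Fin t, (k : ℕ) < m → ω k ≠ i)).card
      = (n-1)^m * n^(t-m) := by
  rw [← Fintype.card_subtype]
  rw [Fintype.card_congr
    (Equiv.subtypePiEquivPi (p := fun (k : Fin t) (x : Fin n) => (k:ℕ) < m → x ≠ i))]
  rw [Fintype.card_pi]
  have h1 : ∀ k : Fin t, Fintype.card {x : Fin n // (k:ℕ) < m → x ≠ i}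
      = if (k:ℕ) < m then n - 1 else n := by
    intro k
    by_cases hk : (k:ℕ) < m
    · have e : {x : Fin n // (k:ℕ) < m → x ≠ i} ≃ {x : Fin n // x ≠ i} :=
        Equiv.subtypeEquivRight (by simp [hk])
      rw [Fintype.card_congr e, Fintype.card_subtype_compl]
      simp [hk]
    · have e : {x : Fin n // (k:ℕ) < m → x ≠ i} ≃ Fin n :=
        Equiv.subtypeUnivEquiv (by simp [hk])
      rw [Fintype.card_congr e, Fintype.card_fin]
      simp [hk]
  simp_rw [h1]
  exact prod_ite_lt' t m (n-1) n hm

private theorem card_hit' (n t m : ℕ) (i : Fin n) (hm : m ≤ t) :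
    (univ.filter (fun ω : Fin t → Fin n => ∃ k : Fin t, (k : ℕ) < m ∧ ω k = i)).card
      = n^t - (n-1)^m * n^(t-m) := by
  have h2 := Finset.card_filter_add_card_filter_not
    (s := (univ : Finset (Fin t → Fin n)))
    (p := fun ω : Fin t → Fin n => ∃ k : Fin t, (k : ℕ) < m ∧ ω k = i)
  have hneg : (univ.filter (fun ω : Fin t → Fin n =>
      ¬ ∃ k : Fin t, (k : ℕ) < m ∧ ω k = i))
      = univ.filter (fun ω : Fin t → Fin n => ∀ k : Fin t, (k : ℕ) < m → ω k ≠ i) := by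
    apply Finset.filter_congr
    intro ω _
    push_neg
    rfl
  have hcard : Fintype.card (Fin t → Fin n) = n ^ t := by
    simp [Fintype.card_fun]
  rw [hneg, card_avoid' n t m i hm, Finset.card_univ, hcard] at h2
  exact Nat.eq_sub_of_add_eq h2

/-- part (ii) of the hitting-probability lemma. For i.i.d. uniform indices
`i_1,…,i_t` on `{1,…,n}` (modeled by the uniform counting measure on `Fin t → Fin n`) and
hitting time `H = min{k : i_k = i}`, if `t = c·s` with `c ≥ 1`, then
`P[H ≤ s | H ≤ t] ≤ (1/c)(1 + t/n)`, and equivalently the closed-form inequality. -/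
theorem statement12 (n s t : ℕ) (hn : 1 ≤ n) (hs : 1 ≤ s) (ht : 1 ≤ t)
    (c : ℝ) (hc : 1 ≤ c) (hts : (t : ℝ) = c * s) (i : Fin n) :
    (((univ.filter (fun ω : Fin t → Fin n =>
          ∃ k : Fin t, (k : ℕ) < s ∧ ω k = i)).card : ℝ) /
        ((univ.filter (fun ω : Fin t → Fin n => ∃ k, ω k = i)).card : ℝ) ≤
      (1 / c) * (1 + (t : ℝ) / n)) ∧
    (1 - (1 - 1 / (n : ℝ)) ^ s) / (1 - (1 - 1 / (n : ℝ)) ^ t) ≤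
      ((s : ℝ) / t) * (1 + (t : ℝ) / n) := by
  have hnR : (0:ℝ) < n := by exact_mod_cast hn
  have hsR : (0:ℝ) < s := by exact_mod_cast hs
  have htR : (0:ℝ) < t := by exact_mod_cast ht
  set x : ℝ := 1 / n with hxdef
  have hx0 : 0 < x := by positivity
  have hx1 : x ≤ 1 := by
    rw [hxdef, div_le_one hnR]; exact_mod_cast hn
  set q : ℝ := 1 - x with hqdef
  have hq0 : 0 ≤ q := by linarith
  -- Bernoulli facts
  have hbern1 : 1 - (s:ℝ) * x ≤ q ^ s := by
    have := one_add_mul_le_pow (a := -x) (by linarith) s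
    simpa [hqdef, sub_eq_add_neg, mul_comm] using this
  have hbern2 : 1 + (t:ℝ) * x ≤ (1 + x) ^ t := by
    have := one_add_mul_le_pow (a := x) (by linarith) t
    simpa [mul_comm] using this
  have hqt1 : q ^ t * (1 + (t:ℝ) * x) ≤ 1 := by
    calc q ^ t * (1 + (t:ℝ) * x) ≤ q ^ t * (1 + x) ^ t := by
          apply mul_le_mul_of_nonneg_left hbern2 (pow_nonneg hq0 t)
      _ = ((1 - x) * (1 + x)) ^ t := by rw [hqdef, mul_pow]
      _ = (1 - x ^ 2) ^ t := by ring_nf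
      _ ≤ 1 := by
          apply pow_le_one₀ (by nlinarith) (by nlinarith)
  have hDkey : (t:ℝ) * x ≤ (1 - q ^ t) * (1 + (t:ℝ) * x) := by nlinarith
  have hD : 0 < 1 - q ^ t := by
    by_contra h
    push_neg at h
    have h3 : (1 - q ^ t) * (1 + (t:ℝ) * x) ≤ 0 :=
      mul_nonpos_of_nonpos_of_nonneg h (by nlinarith)
    nlinarith [mul_pos htR hx0]
  have hNum : 1 - q ^ s ≤ (s:ℝ) * x := by linarith
  -- second inequality
  have main : (1 - q ^ s) / (1 - q ^ t) ≤ ((s:ℝ) / t) * (1 + (t:ℝ) / n) := by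
    rw [div_le_iff₀ hD]
    have htx : (t:ℝ) / n = (t:ℝ) * x := by rw [hxdef]; ring
    rw [htx]
    have h1 : ((s:ℝ) / t) * ((t:ℝ) * x) = (s:ℝ) * x := by field_simp
    have h2 : ((s:ℝ) / t) * ((t:ℝ) * x) ≤ ((s:ℝ) / t) * ((1 - q ^ t) * (1 + (t:ℝ) * x)) :=
      mul_le_mul_of_nonneg_left hDkey (by positivity)
    calc 1 - q ^ s ≤ (s:ℝ) * x := hNum
      _ = ((s:ℝ) / t) * ((t:ℝ) * x) := h1.symm
      _ ≤ ((s:ℝ) / t) * ((1 - q ^ t) * (1 + (t:ℝ) * x)) := h2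
      _ = ((s:ℝ) / t) * (1 + (t:ℝ) * x) * (1 - q ^ t) := by ring
  have hst : s ≤ t := by
    have : (s:ℝ) ≤ (t:ℝ) := by nlinarith
    exact_mod_cast this
  refine ⟨?_, main⟩
  -- relate cards to q powers
  have hc1 : (univ.filter (fun ω : Fin t → Fin n =>
      ∃ k : Fin t, (k : ℕ) < s ∧ ω k = i)).card = n^t - (n-1)^s * n^(t-s) :=
    card_hit' n t s i hst
  have hc2 : (univ.filter (fun ω : Fin t → Fin n => ∃ k, ω k = i)).card
      = n^t - (n-1)^t * n^(t-t) := by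
    rw [← card_hit' n t t i le_rfl]
    congr 1
    apply Finset.filter_congr
    intro ω _
    constructor
    · rintro ⟨k, hk⟩; exact ⟨k, k.isLt, hk⟩
    · rintro ⟨k, _, hk⟩; exact ⟨k, hk⟩
  have hle1 : (n-1)^s * n^(t-s) ≤ n^t := by
    calc (n-1)^s * n^(t-s) ≤ n^s * n^(t-s) :=
        Nat.mul_le_mul_right _ (Nat.pow_le_pow_left (Nat.sub_le n 1) s)
      _ = n^t := by rw [← pow_add, Nat.add_sub_cancel' hst]
  have hle2 : (n-1)^t * n^(t-t) ≤ n^t := by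
    simp only [Nat.sub_self, pow_zero, mul_one]
    exact Nat.pow_le_pow_left (Nat.sub_le n 1) t
  have hcast : ((n:ℝ) - 1) = ((n - 1 : ℕ) : ℝ) := by
    have : (1:ℕ) ≤ n := hn
    push_cast [this]; ring
  have hq_eq : q = ((n-1:ℕ):ℝ) / n := by
    rw [hqdef, hxdef, ← hcast]; field_simp
  -- cast numerator
  have hnum_cast : (((univ.filter (fun ω : Fin t → Fin n =>
      ∃ k : Fin t, (k : ℕ) < s ∧ ω k = i)).card : ℝ))
      = (n:ℝ)^t * (1 - q ^ s) := by
    rw [hc1, Nat.cast_sub hle1]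
    push_cast
    rw [hq_eq, div_pow,
      show (n:ℝ)^t = (n:ℝ)^s * (n:ℝ)^(t-s) from by rw [← pow_add, Nat.add_sub_cancel' hst]]
    field_simp
  have hden_cast : (((univ.filter (fun ω : Fin t → Fin n => ∃ k, ω k = i)).card : ℝ))
      = (n:ℝ)^t * (1 - q ^ t) := by
    rw [hc2, Nat.cast_sub hle2]
    simp only [Nat.sub_self, pow_zero, mul_one]
    push_cast
    rw [hq_eq, div_pow]
    field_simp
  rw [hnum_cast, hden_cast]
  have hnt : (0:ℝ) < (n:ℝ)^t := by positivity
  rw [mul_div_mul_left _ _ (ne_of_gt hnt)]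
  have hcinv : (1:ℝ) / c = (s:ℝ) / t := by
    rw [hts]
    rw [eq_div_iff (by positivity)]
    field_simp
  rw [hcinv]
  exact main
end

section
/- For every integer n ≥ 1 there exist β > 0, a constant a > 0, a dimension d, a loss function f(w; z) on ℝ^d which as a function of w is β-smooth for every data point z but is not convex, twin datasets S, S' of size n, and a data point z, such that for every T > n, coupled uniform-sampling SGD with constant step size α = a/(0.99·β) initialized at w_0 = w_0' = 0 satisfies E_A[f(w_T; z) − f(w_T'; z)] ≥ exp(a·T/2)/n²; in particular the uniform stability satisfies ε_stab ≥ exp(a·T/2)/n². -/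
/-!
The loss `f(w; (v, c)) = ⟪v, w⟫ - [c = 1] ‖w‖² / 2` is concave with `1`-Lipschitz gradient.
With step size `1`, an SGD step on a training point `(v, 1)` is `w ↦ 2 w - v`, so every
perturbation is doubled at each later step. On the dataset whose points are all `(0, 1)`
except `(e, 1)` at index `i` (with `‖e‖ = 1`), the iterate after `T` steps is
`-(∑_{t<T} 2^t [i_{T-t} = i]) e`, while on the all-`(0, 1)` twin it stays `0`. The linear
test loss `w ↦ ⟪-e, w⟫` separates the two runs by that sum, whose expectation over uniform
sampling is `(2^T - 1) / n ≥ exp(0.99 T / 2) / n²`.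
-/

open Finset
open scoped RealInnerProductSpace

noncomputable section

section Gradient

variable {F : Type*} [NormedAddCommGroup F] [InnerProductSpace ℝ F] [CompleteSpace F]

theorem hasGradientAt_inner_sub_mul_half_norm_sq (v x : F) (c : ℝ) :
    HasGradientAt (fun w => ⟪v, w⟫ - c * (‖w‖ ^ 2 / 2)) (v - c • x) x := by
  have hderiv := (innerSL ℝ v).hasFDerivAt.sub
    ((hasStrictFDerivAt_norm_sq x).hasFDerivAt.const_mul (c / 2))
  rw [hasGradientAt_iff_hasFDerivAt]
  refine (hderiv.congr_fderiv ?_).congr_of_eventuallyEq (.of_forall fun w => ?_)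
  · ext y
    simp
    ring
  · simp only [Pi.sub_apply, innerSL_apply_apply]
    ring

end Gradient

section ConcaveQuadLoss

variable {d : ℕ}

/-- The second coordinate of a data point switches the concave term on (value `1`) or off,
so the same loss provides concave training losses and linear test losses. -/
def concaveQuadLoss (w : EuclideanSpace ℝ (Fin d)) (z : EuclideanSpace ℝ (Fin d) × ℝ) : ℝ :=
  ⟪z.1, w⟫ - (if z.2 = 1 then 1 else 0) * (‖w‖ ^ 2 / 2)

theorem concaveQuadLoss_mk_zero (v w : EuclideanSpace ℝ (Fin d)) :
    concaveQuadLoss w (v, 0) = ⟪v, w⟫ := by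
  simp [concaveQuadLoss]

theorem gradient_concaveQuadLoss (z : EuclideanSpace ℝ (Fin d) × ℝ)
    (x : EuclideanSpace ℝ (Fin d)) :
    gradient (fun w => concaveQuadLoss w z) x = z.1 - (if z.2 = 1 then (1 : ℝ) else 0) • x :=
  (hasGradientAt_inner_sub_mul_half_norm_sq z.1 x _).gradient

theorem norm_gradient_concaveQuadLoss_sub_le (z : EuclideanSpace ℝ (Fin d) × ℝ)
    (u v : EuclideanSpace ℝ (Fin d)) :
    ‖gradient (fun w => concaveQuadLoss w z) u - gradient (fun w => concaveQuadLoss w z) v‖ ≤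
      1 * ‖u - v‖ := by
  rw [gradient_concaveQuadLoss, gradient_concaveQuadLoss, sub_sub_sub_cancel_left, ← smul_sub,
    norm_smul, norm_sub_rev]
  gcongr
  split_ifs <;> simp

theorem not_convexOn_concaveQuadLoss [NeZero d] (v : EuclideanSpace ℝ (Fin d)) :
    ¬ ConvexOn ℝ Set.univ (fun w => concaveQuadLoss w (v, 1)) := by
  intro hconv
  obtain ⟨x, hx⟩ := exists_ne (0 : EuclideanSpace ℝ (Fin d))
  have hmid := hconv.2 (Set.mem_univ x) (Set.mem_univ (-x)) (by norm_num : (0 : ℝ) ≤ 1 / 2)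
    (by norm_num : (0 : ℝ) ≤ 1 / 2) (by norm_num)
  have hx2 : 0 < ‖x‖ ^ 2 := by positivity
  simp only [concaveQuadLoss, if_true, smul_neg, add_neg_cancel, inner_zero_right, norm_zero,
    inner_neg_right, norm_neg, smul_eq_mul] at hmid
  nlinarith

theorem sgd_concaveQuadLoss_eq_neg_sum (z : ℕ → EuclideanSpace ℝ (Fin d) × ℝ)
    (hz : ∀ s, (z s).2 = 1) (T : ℕ) :
    sgd concaveQuadLoss (fun _ => 1) z 0 T = -∑ t ∈ range T, (2 : ℝ) ^ t • (z (T - t)).1 := by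
  induction T with
  | zero => simp [sgd]
  | succ T ih =>
    rw [sgd, ih, gradient_concaveQuadLoss, if_pos (hz _), sum_range_succ']
    simp only [Nat.add_sub_add_right, pow_succ, mul_comm _ (2 : ℝ), mul_smul, ← smul_sum,
      pow_zero, one_smul, Nat.sub_zero]
    module

def flatData (d n : ℕ) : Fin n → EuclideanSpace ℝ (Fin d) × ℝ := fun _ => (0, 1)

def spikeData {n : ℕ} (i : Fin n) (e : EuclideanSpace ℝ (Fin d)) :
    Fin n → EuclideanSpace ℝ (Fin d) × ℝ :=
  fun j => (if j = i then e else 0, 1)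

theorem sgd_flatData {n : ℕ} (idx : ℕ → Fin n) (T : ℕ) :
    sgd concaveQuadLoss (fun _ => 1) (fun s => flatData d n (idx s)) 0 T = 0 := by
  rw [sgd_concaveQuadLoss_eq_neg_sum _ (fun _ => rfl)]
  simp [flatData]

theorem sgd_spikeData {n : ℕ} (i : Fin n) (e : EuclideanSpace ℝ (Fin d)) (idx : ℕ → Fin n)
    (T : ℕ) :
    sgd concaveQuadLoss (fun _ => 1) (fun s => spikeData i e (idx s)) 0 T =
      -((∑ t ∈ range T, (2 : ℝ) ^ t * if idx (T - t) = i then 1 else 0) • e) := by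
  rw [sgd_concaveQuadLoss_eq_neg_sum _ (fun _ => rfl), sum_smul]
  simp only [spikeData, mul_smul, ite_smul, one_smul, zero_smul]

theorem concaveQuadLoss_spikeData_sub_flatData {n : ℕ} (i : Fin n)
    {e : EuclideanSpace ℝ (Fin d)} (he : ‖e‖ = 1) (idx : ℕ → Fin n) (T : ℕ) :
    concaveQuadLoss (sgd concaveQuadLoss (fun _ => 1) (fun s => spikeData i e (idx s)) 0 T)
        (-e, 0) -
      concaveQuadLoss (sgd concaveQuadLoss (fun _ => 1) (fun s => flatData d n (idx s)) 0 T)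
        (-e, 0) =
      ∑ t ∈ range T, (2 : ℝ) ^ t * if idx (T - t) = i then 1 else 0 := by
  rw [sgd_spikeData, sgd_flatData, concaveQuadLoss_mk_zero, concaveQuadLoss_mk_zero,
    inner_zero_right, sub_zero, inner_neg_neg, real_inner_smul_right,
    real_inner_self_eq_norm_sq, he]
  ring

end ConcaveQuadLoss

section Expectation

variable {n : ℕ} (hn : 0 < n) (T : ℕ)

theorem expA_sum {ι : Type*} (s : Finset ι) (g : ι → (ℕ → Fin n) → ℝ) :
    expA hn T (fun idx => ∑ k ∈ s, g k idx) = ∑ k ∈ s, expA hn T (g k) := by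
  simp only [expA, sum_div]
  exact sum_comm

theorem expA_const_mul (c : ℝ) (g : (ℕ → Fin n) → ℝ) :
    expA hn T (fun idx => c * g idx) = c * expA hn T g := by
  simp only [expA, ← mul_sum, mul_div_assoc]

theorem expA_mono {g h : (ℕ → Fin n) → ℝ} (hgh : ∀ idx, g idx ≤ h idx) :
    expA hn T g ≤ expA hn T h :=
  div_le_div_of_nonneg_right (sum_le_sum fun _ _ => hgh _) (by positivity)

theorem expA_indicator_eq {s : ℕ} (hs : 0 < s) (hsT : s ≤ T) (i : Fin n) :
    expA hn T (fun idx => if idx s = i then 1 else 0) = 1 / n := by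
  let k : Fin T := ⟨s - 1, by omega⟩
  have hext (ω : Fin T → Fin n) : extSeq hn ω s = ω k := dif_pos ⟨hs, hsT⟩
  have hcount : #{ω : Fin T → Fin n | ω k = i} = n ^ (T - 1) := by
    simpa using Fintype.card_filter_piFinset_const_eq_of_mem univ k (mem_univ i)
  have hpow : (n : ℝ) ^ T = n ^ (T - 1) * n := by
    rw [← pow_succ, Nat.sub_add_cancel (by omega)]
  rw [expA, Fintype.sum_congr _ _ fun ω => by rw [hext], sum_boole, hcount, hpow]
  push_cast
  field_simp

end Expectation

theorem expA_concaveQuadLoss_spikeData_sub_flatData {d n : ℕ} (hn : 0 < n) (T : ℕ) (i : Fin n)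
    {e : EuclideanSpace ℝ (Fin d)} (he : ‖e‖ = 1) :
    expA hn T (fun idx =>
        concaveQuadLoss (sgd concaveQuadLoss (fun _ => 1) (fun s => spikeData i e (idx s)) 0 T)
            (-e, 0) -
          concaveQuadLoss (sgd concaveQuadLoss (fun _ => 1) (fun s => flatData d n (idx s)) 0 T)
            (-e, 0)) =
      (2 ^ T - 1) / n := by
  simp only [concaveQuadLoss_spikeData_sub_flatData i he, expA_sum, expA_const_mul]
  rw [sum_congr rfl fun t ht => by
    rw [expA_indicator_eq hn T (by simp at ht; omega) (Nat.sub_le T t) i], ← sum_mul,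
    geom_sum_eq (by norm_num)]
  ring

theorem exp_mul_le_two_pow_sub_one {T : ℕ} (hT : 2 ≤ T) :
    Real.exp (0.99 * T / 2) ≤ 2 ^ T - 1 := by
  have hq : Real.exp (0.99 / 2) ≤ 2 :=
    (Real.exp_le_exp.2 (by linarith [Real.log_two_gt_d9])).trans_eq (Real.exp_log two_pos)
  have hq2 : Real.exp (0.99 / 2) ^ 2 ≤ 3 := by
    rw [← Real.exp_nat_mul]
    linarith [Real.exp_le_exp.2 (by norm_num : (2 : ℕ) * (0.99 / 2 : ℝ) ≤ 1),
      Real.exp_one_lt_d9]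
  obtain ⟨k, rfl⟩ := Nat.exists_eq_add_of_le hT
  have hk : (1 : ℝ) ≤ 2 ^ k := one_le_pow₀ (by norm_num)
  calc Real.exp (0.99 * ↑(2 + k) / 2) = Real.exp (0.99 / 2) ^ 2 * Real.exp (0.99 / 2) ^ k := by
        rw [← pow_add, ← Real.exp_nat_mul]
        push_cast
        ring_nf
    _ ≤ 3 * 2 ^ k := by gcongr
    _ ≤ 2 ^ (2 + k) - 1 := by
        rw [pow_add]
        linarith

theorem exp_div_sq_le_two_pow_sub_one_div {T n : ℕ} (hT : 2 ≤ T) (hn : 0 < n) :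
    Real.exp (0.99 * T / 2) / (n : ℝ) ^ 2 ≤ (2 ^ T - 1) / (n : ℝ) := by
  have hn' : (1 : ℝ) ≤ n := by exact_mod_cast hn
  calc Real.exp (0.99 * T / 2) / (n : ℝ) ^ 2 ≤ (2 ^ T - 1) / (n : ℝ) ^ 2 := by
        gcongr
        exact exp_mul_le_two_pow_sub_one hT
    _ ≤ (2 ^ T - 1) / (n : ℝ) := by
        gcongr
        · exact sub_nonneg.2 (one_le_pow₀ one_le_two)
        · exact le_self_pow₀ hn' two_ne_zero

/-- exponential stability lower bound for non-convex smooth losses with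
constant step size `α = a/(0.99β)`. -/
theorem statement15 (n : ℕ) (hn : 0 < n) :
    ∃ (β a : ℝ), 0 < β ∧ 0 < a ∧
    ∃ (d : ℕ) (f : EuclideanSpace ℝ (Fin d) → EuclideanSpace ℝ (Fin d) × ℝ → ℝ)
      (S S' : Fin n → EuclideanSpace ℝ (Fin d) × ℝ) (i : Fin n)
      (z : EuclideanSpace ℝ (Fin d) × ℝ),
      -- f is β-smooth in w for every data point, but not convex
      (∀ z u v, ‖gradient (fun w => f w z) u - gradient (fun w => f w z) v‖ ≤ β * ‖u - v‖) ∧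
      (∃ z, ¬ ConvexOn ℝ Set.univ (fun w => f w z)) ∧
      -- S, S' are twin datasets differing exactly at index i
      (∀ j, j ≠ i → S j = S' j) ∧ S i ≠ S' i ∧
      -- SGD with constant step size α = a/(0.99β) from w₀ = 0, for every horizon T > n
      (∀ T : ℕ, n < T →
        expA hn T (fun idx =>
            f (sgd f (fun _ => a / (0.99 * β)) (fun s => S (idx s)) 0 T) z -
              f (sgd f (fun _ => a / (0.99 * β)) (fun s => S' (idx s)) 0 T) z) ≥
          Real.exp (a * T / 2) / (n : ℝ) ^ 2 ∧
        -- in particular, uniform stability is at least exp(aT/2)/n²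
        (∀ ε : ℝ,
          (∀ (Sa Sb : Fin n → EuclideanSpace ℝ (Fin d) × ℝ) (ia : Fin n),
              (∀ j, j ≠ ia → Sa j = Sb j) →
              ∀ za, expA hn T (fun idx =>
                |f (sgd f (fun _ => a / (0.99 * β)) (fun s => Sa (idx s)) 0 T) za -
                  f (sgd f (fun _ => a / (0.99 * β)) (fun s => Sb (idx s)) 0 T) za|) ≤ ε) →
            Real.exp (a * T / 2) / (n : ℝ) ^ 2 ≤ ε)) := by
  set i : Fin n := ⟨0, hn⟩
  set e : EuclideanSpace ℝ (Fin 1) := EuclideanSpace.single 0 1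
  have he : ‖e‖ = 1 := by simp [e]
  have htwin : ∀ j, j ≠ i → spikeData i e j = flatData 1 n j := fun j hj => by
    simp [spikeData, flatData, hj]
  have hstep : (0.99 : ℝ) / (0.99 * 1) = 1 := by norm_num
  refine ⟨1, 0.99, one_pos, by norm_num, 1, concaveQuadLoss, spikeData i e, flatData 1 n, i,
    (-e, 0), norm_gradient_concaveQuadLoss_sub_le, ⟨(0, 1), not_convexOn_concaveQuadLoss 0⟩,
    htwin, by simp [spikeData, flatData, e], fun T hT => ?_⟩
  have hgap := (exp_div_sq_le_two_pow_sub_one_div (by omega) hn).trans_eq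
    (expA_concaveQuadLoss_spikeData_sub_flatData hn T i he).symm
  simp only [hstep]
  exact ⟨hgap, fun ε hε => hgap.trans ((expA_mono hn T fun idx => le_abs_self _).trans
    (hε _ _ i htwin (-e, 0)))⟩
end
end
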